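/- Let X and Z be positive semidefinite matrices with Z positive definite, and suppose X • Z_t ≤ c for some constant c. Then ‖X‖ ≤ c / λ_min(Z_t), where λ_min denotes the smallest eigenvalue. More generally: if X_t, Z_t are feasible for the perturbed dual and primal SDPs with Z_t positive definite, and X, Z are optimal solutions, then X • Z_t + X_t • Z = X_t • Z_t, and consequently the optimal solution sets of the perturbed dual and primal SDPs are uniformly bounded for all sufficiently small t, provided the primal SDP is strictly feasible and the perturbed dual has strictly feasible points X_t → X₀. -/

import Mathlib

open Matrix Set Filter Topology

noncomputable section

abbrev Mat (n : ℕ) := Matrix (Fin n) (Fin n) ℝ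

def ip {n : ℕ} (A B : Mat n) : ℝ := ∑ i, ∑ j, A i j * B i j

def frobNorm {n : ℕ} (X : Mat n) : ℝ := Real.sqrt (∑ i, ∑ j, (X i j) ^ 2)

def dualFeas {n m : ℕ} (A : Fin m → Mat n) (b : Fin m → ℝ) : Set (Mat n) :=
  {X | X.PosSemidef ∧ ∀ k, ip (A k) X = b k}

def dualVals {n m : ℕ} (A₀ : Mat n) (A : Fin m → Mat n) (b : Fin m → ℝ) : Set ℝ :=
  {v | ∃ X ∈ dualFeas A b, v = ip A₀ X}

/-- Optimal solution set of the dual SDP. -/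
def dualOpt {n m : ℕ} (A₀ : Mat n) (A : Fin m → Mat n) (b : Fin m → ℝ) : Set (Mat n) :=
  {X ∈ dualFeas A b | ip A₀ X = sInf (dualVals A₀ A b)}

def primalVals {n m : ℕ} (A₀ : Mat n) (A : Fin m → Mat n) (b : Fin m → ℝ) : Set ℝ :=
  {v | ∃ y : Fin m → ℝ, (A₀ - ∑ k, y k • A k).PosSemidef ∧ v = ∑ k, b k * y k}

/-- Optimal slacks of the primal SDP: image of the optimal solution set under
`(y, Z) ↦ Z`. -/
def primalOptSlack {n m : ℕ} (A₀ : Mat n) (A : Fin m → Mat n) (b : Fin m → ℝ) :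
    Set (Mat n) :=
  {Z | ∃ y : Fin m → ℝ, (∑ k, y k • A k) + Z = A₀ ∧ Z.PosSemidef ∧
    (∑ k, b k * y k) = sSup (primalVals A₀ A b)}

/-!
For `X ⪰ 0` one has `‖X‖ ≤ tr X` (as `X ⪯ (tr X) I`) and `a · tr X ≤ X • M` whenever
`M ⪰ a I`; with `a = λ_min(Z)` this gives (i).

If `Z = A₀ - ∑ yₖ Aₖ` and `X` is dual feasible, then `X • Z = A₀ • X - bᵀy` is the duality gap
of the pair, so the identity (ii) says that the gap vanishes between optimal solutions: strong
duality. It holds because the dual is strictly feasible. Inside the range of the constraint map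
`Φ`, the convex set of pairs `(Φ X - b, τ)` with `X ⪰ 0`, `A₀ • X < τ` then has interior, and
separating `(0, d)`, `d` the dual optimal value, from it produces a primal feasible `y` with
`bᵀy ≥ d`.

For (iii), `|vᵀ E v| ≤ ‖E‖ |v|²` keeps the slack of `y₀` and the points `X_t` uniformly positive
definite for small `t`. For an optimal `X`, `X • (A₀(t) - ∑ y₀ₖ Aₖ(t))` is at most the gap
`A₀(t) • X_t - b(t)ᵀ y₀`, which stays bounded, so (i) bounds `‖X‖`; optimal slacks `Z` are
bounded in the same way, with the roles of `y₀` and `X_t` exchanged.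
-/

section Spectral
variable {ι : Type*} [Fintype ι] [DecidableEq ι] {M : Matrix ι ι ℝ}

open scoped MatrixOrder in
theorem Matrix.IsHermitian.posSemidef_sub_smul_one_iff (hM : M.IsHermitian) (a : ℝ) :
    (M - a • 1).PosSemidef ↔ ∀ i, a ≤ hM.eigenvalues i := by
  rw [← Matrix.le_iff, ← Algebra.algebraMap_eq_smul_one,
    algebraMap_le_iff_le_spectrum hM.isSelfAdjoint, hM.spectrum_real_eq_range_eigenvalues]
  simp

open scoped MatrixOrder in
theorem Matrix.IsHermitian.posSemidef_smul_one_sub_iff (hM : M.IsHermitian) (a : ℝ) :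
    (a • 1 - M).PosSemidef ↔ ∀ i, hM.eigenvalues i ≤ a := by
  rw [← Matrix.le_iff, ← Algebra.algebraMap_eq_smul_one,
    le_algebraMap_iff_spectrum_le hM.isSelfAdjoint, hM.spectrum_real_eq_range_eigenvalues]
  simp

theorem Matrix.IsHermitian.posSemidef_sub_iInf_eigenvalues_smul_one (hM : M.IsHermitian) :
    (M - (⨅ i, hM.eigenvalues i) • 1).PosSemidef :=
  (hM.posSemidef_sub_smul_one_iff _).2 fun j => ciInf_le (Finite.bddBelow_range _) j

theorem Matrix.PosDef.iInf_eigenvalues_pos [Nonempty ι] (hM : M.PosDef) :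
    0 < ⨅ i, hM.1.eigenvalues i := by
  obtain ⟨i, hi⟩ := exists_eq_ciInf_of_finite (f := hM.1.eigenvalues)
  exact hi ▸ hM.eigenvalues_pos i

theorem Matrix.PosDef.exists_pos_posSemidef_sub_smul_one (hM : M.PosDef) :
    ∃ a : ℝ, 0 < a ∧ (M - a • 1).PosSemidef := by
  rcases isEmpty_or_nonempty ι with hι | hι
  · refine ⟨1, one_pos, ?_⟩
    rw [Subsingleton.elim (M - (1 : ℝ) • 1) 0]
    exact PosSemidef.zero
  · exact ⟨_, hM.iInf_eigenvalues_pos, hM.1.posSemidef_sub_iInf_eigenvalues_smul_one⟩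

theorem Matrix.PosSemidef.posSemidef_trace_smul_one_sub (hM : M.PosSemidef) :
    (M.trace • 1 - M).PosSemidef := by
  refine (hM.1.posSemidef_smul_one_sub_iff _).2 fun i => ?_
  rw [hM.1.trace_eq_sum_eigenvalues]
  simpa using Finset.single_le_sum (fun j _ => hM.eigenvalues_nonneg j) (Finset.mem_univ i)

theorem dotProduct_sub_smul_one_mulVec (a : ℝ) (v : ι → ℝ) :
    v ⬝ᵥ ((M - a • 1) *ᵥ v) = v ⬝ᵥ (M *ᵥ v) - a * (v ⬝ᵥ v) := by
  rw [sub_mulVec, smul_mulVec, one_mulVec, dotProduct_sub, dotProduct_smul, smul_eq_mul]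

end Spectral

theorem Matrix.PosSemidef.of_sub_smul_one {ι : Type*} [DecidableEq ι] {M : Matrix ι ι ℝ}
    {a : ℝ} (hM : (M - a • 1).PosSemidef) (ha : 0 ≤ a) : M.PosSemidef := by
  simpa using hM.add (PosSemidef.one.smul ha)

section TraceInnerProduct
variable {n : ℕ}

theorem ip_comm (A B : Mat n) : ip A B = ip B A := by
  simp only [ip, mul_comm]

theorem ip_add_right (A B C : Mat n) : ip A (B + C) = ip A B + ip A C := by
  simp only [ip, Matrix.add_apply, mul_add, Finset.sum_add_distrib]

theorem ip_smul_right (A : Mat n) (r : ℝ) (B : Mat n) : ip A (r • B) = r * ip A B := by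
  simp only [ip, Matrix.smul_apply, smul_eq_mul, Finset.mul_sum, mul_left_comm]

theorem ip_sub_right (A B C : Mat n) : ip A (B - C) = ip A B - ip A C := by
  simp only [ip, Matrix.sub_apply, mul_sub, Finset.sum_sub_distrib]

theorem ip_sum_right {ι : Type*} (s : Finset ι) (A : Mat n) (B : ι → Mat n) :
    ip A (∑ i ∈ s, B i) = ∑ i ∈ s, ip A (B i) := by
  simp only [ip, Matrix.sum_apply, Finset.mul_sum]
  exact (Finset.sum_congr rfl fun _ _ => Finset.sum_comm).trans Finset.sum_comm

theorem ip_one_right (A : Mat n) : ip A 1 = A.trace := by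
  simp [ip, one_apply, trace]

theorem ip_vecMulVec (M : Mat n) (v w : Fin n → ℝ) : ip M (vecMulVec v w) = v ⬝ᵥ (M *ᵥ w) := by
  simp only [ip, vecMulVec_apply, dotProduct, mulVec, Finset.mul_sum]
  exact Finset.sum_congr rfl fun i _ => Finset.sum_congr rfl fun j _ => by ring

theorem continuous_ip : Continuous fun p : Mat n × Mat n => ip p.1 p.2 := by
  unfold ip; fun_prop

theorem Filter.Tendsto.ip {α : Type*} {l : Filter α} {F G : α → Mat n} {P Q : Mat n}
    (hF : Tendsto F l (𝓝 P)) (hG : Tendsto G l (𝓝 Q)) :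
    Tendsto (fun t => _root_.ip (F t) (G t)) l (𝓝 (_root_.ip P Q)) := by
  have := (continuous_ip.tendsto (P, Q)).comp (hF.prodMk_nhds hG)
  exact this

theorem ip_nonneg {X Z : Mat n} (hX : X.PosSemidef) (hZ : Z.PosSemidef) : 0 ≤ ip X Z := by
  obtain ⟨k, w, rfl⟩ := Matrix.posSemidef_iff_eq_sum_vecMulVec.1 hX
  rw [ip_comm, ip_sum_right]
  exact Finset.sum_nonneg fun i _ => by
    simpa [ip_vecMulVec] using hZ.dotProduct_mulVec_nonneg (w i)

theorem mul_trace_le_ip {X M : Mat n} {a : ℝ} (hX : X.PosSemidef) (hM : (M - a • 1).PosSemidef) :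
    a * X.trace ≤ ip X M := by
  have := ip_nonneg hX hM
  rw [ip_sub_right, ip_smul_right, ip_one_right] at this
  linarith

theorem ip_le_mul_trace {X M : Mat n} {a : ℝ} (hX : X.PosSemidef) (hM : (a • 1 - M).PosSemidef) :
    ip X M ≤ a * X.trace := by
  have := ip_nonneg hX hM
  rw [ip_sub_right, ip_smul_right, ip_one_right] at this
  linarith

end TraceInnerProduct

section FrobeniusNorm
variable {n : ℕ}

theorem frobNorm_eq_sqrt_ip (X : Mat n) : frobNorm X = √(ip X X) := by
  simp only [frobNorm, ip, sq]

theorem continuous_frobNorm : Continuous (frobNorm : Mat n → ℝ) := by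
  unfold frobNorm; fun_prop

theorem abs_ip_le (A B : Mat n) : |ip A B| ≤ frobNorm A * frobNorm B := by
  rw [frobNorm, frobNorm, ← Real.sqrt_mul (by positivity)]
  apply Real.abs_le_sqrt
  simp only [ip, ← Finset.sum_product']
  exact Finset.sum_mul_sq_le_sq_mul_sq _ _ _

theorem frobNorm_vecMulVec_self (v : Fin n → ℝ) : frobNorm (vecMulVec v v) = v ⬝ᵥ v := by
  rw [frobNorm_eq_sqrt_ip, ip_vecMulVec, vecMulVec_mulVec]
  simp [Real.sqrt_mul_self (by simpa using dotProduct_star_self_nonneg v)]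

theorem abs_dotProduct_mulVec_le (E : Mat n) (v : Fin n → ℝ) :
    |v ⬝ᵥ (E *ᵥ v)| ≤ frobNorm E * (v ⬝ᵥ v) := by
  simpa [ip_vecMulVec, frobNorm_vecMulVec_self] using abs_ip_le E (vecMulVec v v)

theorem frobNorm_le_trace {X : Mat n} (hX : X.PosSemidef) : frobNorm X ≤ X.trace := by
  rw [frobNorm_eq_sqrt_ip, ← Real.sqrt_sq hX.trace_nonneg, sq]
  exact Real.sqrt_le_sqrt (ip_le_mul_trace hX hX.posSemidef_trace_smul_one_sub)

theorem Filter.Tendsto.eventually_posSemidef_sub_smul_one {α : Type*} {l : Filter α}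
    {M : α → Mat n} {M₀ : Mat n} {a a' : ℝ} (hM : Tendsto M l (𝓝 M₀))
    (hherm : ∀ᶠ t in l, (M t).IsHermitian) (h₀ : (M₀ - a • 1).PosSemidef) (ha : a' < a) :
    ∀ᶠ t in l, (M t - a' • 1).PosSemidef := by
  have hdist : Tendsto (fun t => frobNorm (M t - M₀)) l (𝓝 0) := by
    have := (continuous_frobNorm.tendsto (M₀ - M₀)).comp (hM.sub_const M₀)
    rwa [sub_self, show frobNorm (0 : Mat n) = 0 by simp [frobNorm]] at this
  filter_upwards [hdist.eventually (gt_mem_nhds (sub_pos.2 ha)), hherm] with t ht hherm_t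
  refine PosSemidef.of_dotProduct_mulVec_nonneg
    (hherm_t.sub (isHermitian_one.smul (.all a'))) fun v => ?_
  have h₀v := h₀.dotProduct_mulVec_nonneg v
  have hE := abs_dotProduct_mulVec_le (M t - M₀) v
  have hv : 0 ≤ v ⬝ᵥ v := by simpa using dotProduct_star_self_nonneg v
  rw [star_trivial, dotProduct_sub_smul_one_mulVec] at h₀v ⊢
  rw [sub_mulVec, dotProduct_sub] at hE
  nlinarith [neg_abs_le (v ⬝ᵥ (M t *ᵥ v) - v ⬝ᵥ (M₀ *ᵥ v))]

end FrobeniusNorm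

section ConicDuality
variable {V W : Type*} [AddCommGroup V] [Module ℝ V] [AddCommGroup W] [Module ℝ W]

theorem Convex.exists_forall_le_of_mem_interior [TopologicalSpace W] [IsTopologicalAddGroup W]
    [ContinuousSMul ℝ W] {T : Set W} (hT : Convex ℝ T) {q x : W} (hq : q ∈ interior T)
    (hx : x ∉ T) : ∃ f : StrongDual ℝ W, (∀ p ∈ T, f p ≤ f x) ∧ f q < f x := by
  obtain ⟨f, hf⟩ := geometric_hahn_banach_open_point hT.interior isOpen_interior
    (fun h => hx (interior_subset h))
  refine ⟨f, fun p hp => ?_, hf q hq⟩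
  refine closure_minimal (fun p hp => (hf p hp).le) (isClosed_le f.continuous continuous_const) ?_
  rw [hT.closure_interior_eq_closure_of_nonempty_interior ⟨q, hq⟩]
  exact subset_closure hp

theorem PointedCone.map_nonpos_of_forall_le (K : PointedCone ℝ V) (F : V →ₗ[ℝ] ℝ) {C : ℝ}
    (h : ∀ X ∈ K, F X ≤ C) {X : V} (hX : X ∈ K) : F X ≤ 0 := by
  by_contra! hFX
  have := h _ (K.smul_mem (by positivity : 0 ≤ (|C| + 1) / F X) hX)
  rw [map_smul, smul_eq_mul, div_mul_cancel₀ _ hFX.ne'] at this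
  linarith [le_abs_self C]

def perturbedValueSet (K : PointedCone ℝ V) (c : V →ₗ[ℝ] ℝ) (Φ : V →ₗ[ℝ] W) (b : W) :
    Set (W × ℝ) :=
  {p | ∃ X ∈ K, Φ X = b + p.1 ∧ c X < p.2}

theorem convex_perturbedValueSet (K : PointedCone ℝ V) (c : V →ₗ[ℝ] ℝ) (Φ : V →ₗ[ℝ] W)
    (b : W) : Convex ℝ (perturbedValueSet K c Φ b) := by
  rintro ⟨u₁, t₁⟩ ⟨X₁, hX₁, hΦ₁, hc₁⟩ ⟨u₂, t₂⟩ ⟨X₂, hX₂, hΦ₂, hc₂⟩ θ₁ θ₂ hθ₁ hθ₂ hθ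
  refine ⟨θ₁ • X₁ + θ₂ • X₂, K.convex hX₁ hX₂ hθ₁ hθ₂ hθ, ?_, ?_⟩
  · simp only [map_add, map_smul, hΦ₁, hΦ₂, Prod.fst_add, Prod.smul_fst, smul_add]
    linear_combination (norm := module) hθ • b
  · simp only [map_add, map_smul, smul_eq_mul, Prod.snd_add, Prod.smul_snd]
    rcases hθ₁.eq_or_lt with rfl | hθ₁
    · obtain rfl : θ₂ = 1 := by simpa using hθ
      simpa using hc₂
    · exact add_lt_add_of_lt_of_le (mul_lt_mul_of_pos_left hc₁ hθ₁)
        (mul_le_mul_of_nonneg_left hc₂.le hθ₂)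

theorem mem_interior_perturbedValueSet [TopologicalSpace W] (K : PointedCone ℝ V)
    (c : V →ₗ[ℝ] ℝ) (Φ : V →ₗ[ℝ] W) (b : W) {s : ℝ}
    (hslater : ∀ᶠ u in 𝓝 (0 : W), ∃ X ∈ K, Φ X = b + u ∧ c X < s) :
    ((0 : W), s + 1) ∈ interior (perturbedValueSet K c Φ b) := by
  refine mem_interior_iff_mem_nhds.2 (mem_of_superset
    (prod_mem_nhds hslater (Ioi_mem_nhds (lt_add_one s))) ?_)
  rintro ⟨u, t⟩ ⟨⟨X, hX, hΦ, hc⟩, ht⟩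
  exact ⟨X, hX, hΦ, hc.trans ht⟩

theorem ContinuousLinearMap.apply_prod_eq [TopologicalSpace W] (f : StrongDual ℝ (W × ℝ))
    (u : W) (t : ℝ) : f (u, t) = f (u, 0) + t * f (0, 1) := by
  rw [show ((u, t) : W × ℝ) = (u, 0) + t • (0, 1) by simp, map_add, map_smul, smul_eq_mul]

theorem PointedCone.exists_lagrangeMultiplier_of_slater [TopologicalSpace W]
    [IsTopologicalAddGroup W] [ContinuousSMul ℝ W] (K : PointedCone ℝ V) (c : V →ₗ[ℝ] ℝ)
    (Φ : V →ₗ[ℝ] W) (b : W) {d s : ℝ} (hd : ∀ X ∈ K, Φ X = b → d ≤ c X)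
    (hslater : ∀ᶠ u in 𝓝 (0 : W), ∃ X ∈ K, Φ X = b + u ∧ c X < s) :
    ∃ g : StrongDual ℝ W, (∀ X ∈ K, g (Φ X) ≤ c X) ∧ d ≤ g b := by
  set T := perturbedValueSet K c Φ b
  have hdT : ((0 : W), d) ∉ T := fun ⟨X, hX, hΦ, hc⟩ => (hd X hX (by simpa using hΦ)).not_gt hc
  obtain ⟨X₀, hX₀, hΦ₀, hc₀⟩ := hslater.self_of_nhds
  have hds : d < s + 1 := by linarith [hd X₀ hX₀ (by simpa using hΦ₀)]
  obtain ⟨f, hfT, hf⟩ := (convex_perturbedValueSet K c Φ b).exists_forall_le_of_mem_interior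
    (mem_interior_perturbedValueSet K c Φ b hslater) hdT
  set μ := f (0, 1)
  have hf_apply : ∀ u t, f (u, t) = f (u, 0) + t * μ := f.apply_prod_eq
  have hμ : μ < 0 := by
    rw [hf_apply, hf_apply 0 d] at hf
    nlinarith
  set g : StrongDual ℝ W := (-μ)⁻¹ • f.comp (ContinuousLinearMap.inl ℝ W ℝ)
  have hg : ∀ X ∈ K, g (Φ X) - g b + d ≤ c X := by
    intro X hX
    refine le_of_forall_gt_imp_ge_of_dense fun t ht => ?_
    have := hfT (Φ X - b, t) ⟨X, hX, (add_sub_cancel b (Φ X)).symm, ht⟩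
    rw [hf_apply, hf_apply 0 d, show ((0 : W), (0 : ℝ)) = 0 from rfl, map_zero,
      show ((Φ X - b, 0) : W × ℝ) = (Φ X, 0) - (b, 0) by simp, map_sub] at this
    have : (-μ)⁻¹ * (f (Φ X, 0) - f (b, 0)) ≤ t - d := by
      rw [inv_mul_le_iff₀ (neg_pos.2 hμ)]
      linarith
    simp only [g, _root_.smul_apply, ContinuousLinearMap.comp_apply,
      ContinuousLinearMap.inl_apply, smul_eq_mul]
    linarith
  refine ⟨g, fun X hX => ?_, by simpa using hg 0 K.zero_mem⟩
  have := K.map_nonpos_of_forall_le ((g : W →ₗ[ℝ] ℝ) ∘ₗ Φ - c) (C := g b - d)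
    (fun X hX => by simp only [LinearMap.sub_apply, LinearMap.comp_apply,
      ContinuousLinearMap.coe_coe]; linarith [hg X hX]) hX
  simpa using this

end ConicDuality

section Duality
variable {n m : ℕ}

def posSemidefCone (n : ℕ) : PointedCone ℝ (Mat n) where
  carrier := {X | X.PosSemidef}
  add_mem' := PosSemidef.add
  zero_mem' := PosSemidef.zero
  smul_mem' r _ hX := hX.smul r.2

@[simp]
theorem mem_posSemidefCone {X : Mat n} : X ∈ posSemidefCone n ↔ X.PosSemidef := Iff.rfl

def ipₗ (A : Mat n) : Mat n →ₗ[ℝ] ℝ where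
  toFun := ip A
  map_add' := ip_add_right A
  map_smul' := ip_smul_right A

@[simp]
theorem ipₗ_apply (A X : Mat n) : ipₗ A X = ip A X := rfl

def constraintMap (A : Fin m → Mat n) : Mat n →ₗ[ℝ] (Fin m → ℝ) :=
  LinearMap.pi fun k => ipₗ (A k)

@[simp]
theorem constraintMap_apply (A : Fin m → Mat n) (X : Mat n) (k : Fin m) :
    constraintMap A X k = ip (A k) X := rfl

theorem ip_transpose_right {A : Mat n} (hA : A.IsSymm) (E : Mat n) : ip A Eᵀ = ip A E := by
  conv_lhs => rw [← hA]
  simp only [ip, transpose_apply]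
  exact Finset.sum_comm

theorem isHermitian_sub_sum_smul {A₀ : Mat n} {A : Fin m → Mat n} (hA₀ : A₀.IsSymm)
    (hA : ∀ k, (A k).IsSymm) (y : Fin m → ℝ) : (A₀ - ∑ k, y k • A k).IsHermitian := by
  simp only [IsHermitian, conjTranspose_eq_transpose_of_trivial, transpose_sub, transpose_sum,
    transpose_smul, hA₀.eq, fun k => (hA k).eq]

theorem ip_slack_eq {A₀ X Z : Mat n} {A : Fin m → Mat n} {b y : Fin m → ℝ}
    (hX : ∀ k, ip (A k) X = b k) (hZ : ∑ k, y k • A k + Z = A₀) :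
    ip X Z = ip A₀ X - ∑ k, b k * y k := by
  have hX' : ∀ k, ip X (A k) = b k := fun k => (ip_comm _ _).trans (hX k)
  rw [← hZ, ip_comm _ X, ip_add_right, ip_sum_right]
  simp only [ip_smul_right, hX', mul_comm (y _)]
  ring

theorem sum_mul_le_ip_of_feasible {A₀ X : Mat n} {A : Fin m → Mat n} {b y : Fin m → ℝ}
    (hX : X ∈ dualFeas A b) (hy : (A₀ - ∑ k, y k • A k).PosSemidef) :
    ∑ k, b k * y k ≤ ip A₀ X := by
  have := ip_nonneg hX.1 hy
  rw [ip_slack_eq hX.2 (add_sub_cancel _ A₀)] at this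
  linarith

theorem bddBelow_dualVals {A₀ : Mat n} {A : Fin m → Mat n} {b y : Fin m → ℝ}
    (hy : (A₀ - ∑ k, y k • A k).PosSemidef) : BddBelow (dualVals A₀ A b) := by
  refine ⟨∑ k, b k * y k, ?_⟩
  rintro _ ⟨X, hX, rfl⟩
  exact sum_mul_le_ip_of_feasible hX hy

theorem bddAbove_primalVals {A₀ X : Mat n} {A : Fin m → Mat n} {b : Fin m → ℝ}
    (hX : X ∈ dualFeas A b) : BddAbove (primalVals A₀ A b) := by
  refine ⟨ip A₀ X, ?_⟩
  rintro _ ⟨y, hy, rfl⟩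
  exact sum_mul_le_ip_of_feasible hX hy

end Duality

section StrongDuality
variable {n m : ℕ}

theorem posSemidef_sub_sum_smul_of_forall_le {A₀ : Mat n} {A : Fin m → Mat n} (hA₀ : A₀.IsSymm)
    (hA : ∀ k, (A k).IsSymm) {y : Fin m → ℝ}
    (h : ∀ X : Mat n, X.PosSemidef → ∑ k, ip (A k) X * y k ≤ ip A₀ X) :
    (A₀ - ∑ k, y k • A k).PosSemidef := by
  refine PosSemidef.of_dotProduct_mulVec_nonneg (isHermitian_sub_sum_smul hA₀ hA y) fun v => ?_
  have hv := h _ (posSemidef_vecMulVec_self_star v)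
  rw [star_trivial, ← ip_vecMulVec, ip_comm,
    ip_slack_eq (b := fun k => ip (A k) (vecMulVec v v)) (fun k => rfl) (add_sub_cancel _ A₀)]
  simpa using hv

theorem eventually_exists_posSemidef_of_posDef {A₀ Xs : Mat n} {A : Fin m → Mat n}
    (hA : ∀ k, (A k).IsSymm) (hXs : Xs.PosDef) :
    ∀ᶠ u in 𝓝 (0 : LinearMap.range (constraintMap A)), ∃ X ∈ posSemidefCone n,
      (constraintMap A).rangeRestrict X = (constraintMap A).rangeRestrict Xs + u ∧
      ip A₀ X < ip A₀ Xs + 1 := by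
  set Φ := (constraintMap A).rangeRestrict
  obtain ⟨σ, hσ⟩ := Φ.exists_rightInverse_of_surjective (LinearMap.range_rangeRestrict _)
  -- symmetrizing `σ u` makes `X u` symmetric and, the `A k` being symmetric, keeps `Φ (X u)`
  set X : LinearMap.range (constraintMap A) → Mat n := fun u => Xs + (1 / 2 : ℝ) • (σ u + (σ u)ᵀ)
  have hXc : Continuous X := by
    have := σ.continuous_of_finiteDimensional
    fun_prop
  have hX : Tendsto X (𝓝 0) (𝓝 Xs) := by simpa [X] using hXc.tendsto 0
  have hherm : ∀ u, (X u).IsHermitian := fun u => hXs.1.add <|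
    (by simpa [conjTranspose_eq_transpose_of_trivial] using isHermitian_add_transpose_self (σ u)
      : (σ u + (σ u)ᵀ).IsHermitian).smul (.all _)
  obtain ⟨a, ha, hXsa⟩ := hXs.exists_pos_posSemidef_sub_smul_one
  have hval : Tendsto (fun u => ip A₀ (X u)) (𝓝 0) (𝓝 (ip A₀ Xs)) :=
    tendsto_const_nhds.ip hX
  filter_upwards [hX.eventually_posSemidef_sub_smul_one (.of_forall hherm) hXsa ha,
    hval.eventually (gt_mem_nhds (lt_add_one _))] with u hpsd hlt
  refine ⟨X u, by simpa using hpsd, Subtype.ext (funext fun k => ?_), hlt⟩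
  have hσu : ip (A k) (σ u) = u.1 k := congrFun (congrArg Subtype.val (LinearMap.congr_fun hσ u)) k
  show ip (A k) (X u) = ip (A k) Xs + u.1 k
  rw [ip_add_right, ip_smul_right, ip_add_right, ip_transpose_right (hA k), hσu]
  ring

theorem exists_primal_ge_of_dual_slater {A₀ Xs : Mat n} {A : Fin m → Mat n} {b : Fin m → ℝ}
    {d : ℝ} (hA₀ : A₀.IsSymm) (hA : ∀ k, (A k).IsSymm) (hXs : Xs.PosDef)
    (hXsb : ∀ k, ip (A k) Xs = b k) (hd : ∀ X ∈ dualFeas A b, d ≤ ip A₀ X) :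
    ∃ y : Fin m → ℝ, (A₀ - ∑ k, y k • A k).PosSemidef ∧ d ≤ ∑ k, b k * y k := by
  set Φ := (constraintMap A).rangeRestrict
  have hb : constraintMap A Xs = b := funext hXsb
  obtain ⟨g, hgΦ, hgb⟩ := (posSemidefCone n).exists_lagrangeMultiplier_of_slater (ipₗ A₀) Φ
    (Φ Xs) (fun X hX hΦX => hd X ⟨hX, fun k => by
      simpa [Φ, hXsb] using congrFun (congrArg Subtype.val hΦX) k⟩)
    (eventually_exists_posSemidef_of_posDef hA hXs)
  obtain ⟨G, hG⟩ := LinearMap.exists_extend (g : LinearMap.range (constraintMap A) →ₗ[ℝ] ℝ)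
  have hGΦ : ∀ X, G (constraintMap A X) = g (Φ X) := fun X => LinearMap.congr_fun hG (Φ X)
  set y : Fin m → ℝ := fun k => G (Pi.single k 1)
  have hGy : ∀ u, G u = ∑ k, u k * y k := fun u => by
    rw [LinearMap.pi_apply_eq_sum_univ]
    refine Finset.sum_congr rfl fun k _ => ?_
    rw [smul_eq_mul]
    congr 2
    ext j
    simp [Pi.single_apply, eq_comm]
  refine ⟨y, posSemidef_sub_sum_smul_of_forall_le hA₀ hA fun X hX => ?_, ?_⟩
  · simpa [← hGΦ, hGy] using hgΦ X hX
  · simpa [← hGΦ, hGy, hb] using hgb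

theorem sSup_primalVals_eq_sInf_dualVals {A₀ Xs : Mat n} {A : Fin m → Mat n}
    {b y₀ : Fin m → ℝ} (hA₀ : A₀.IsSymm) (hA : ∀ k, (A k).IsSymm) (hXs : Xs.PosDef)
    (hXsb : ∀ k, ip (A k) Xs = b k) (hy₀ : (A₀ - ∑ k, y₀ k • A k).PosSemidef) :
    sSup (primalVals A₀ A b) = sInf (dualVals A₀ A b) := by
  have hXs' : Xs ∈ dualFeas A b := ⟨hXs.posSemidef, hXsb⟩
  refine le_antisymm (csSup_le ⟨_, y₀, hy₀, rfl⟩ ?_) ?_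
  · rintro _ ⟨y, hy, rfl⟩
    exact le_csInf ⟨_, Xs, hXs', rfl⟩ fun _ ⟨X, hX, hv⟩ => hv ▸ sum_mul_le_ip_of_feasible hX hy
  · obtain ⟨y, hy, hyd⟩ := exists_primal_ge_of_dual_slater hA₀ hA hXs hXsb
      fun X hX => csInf_le (bddBelow_dualVals hy₀) ⟨X, hX, rfl⟩
    exact hyd.trans (le_csSup (bddAbove_primalVals hXs') ⟨y, hy, rfl⟩)

end StrongDuality

section OptimalSets
variable {n m : ℕ}

theorem frobNorm_le_div_of_ip_le {X M : Mat n} {a c : ℝ} (hX : X.PosSemidef) (ha : 0 < a)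
    (hM : (M - a • 1).PosSemidef) (h : ip X M ≤ c) : frobNorm X ≤ c / a := by
  rw [le_div_iff₀ ha]
  calc frobNorm X * a ≤ X.trace * a := mul_le_mul_of_nonneg_right (frobNorm_le_trace hX) ha.le
    _ ≤ ip X M := by linarith [mul_trace_le_ip hX hM]
    _ ≤ c := h

theorem frobNorm_le_div_iInf_eigenvalues {X Z : Mat n} {c : ℝ} (hX : X.PosSemidef)
    (hZ : Z.PosDef) (h : ip X Z ≤ c) : frobNorm X ≤ c / ⨅ i, hZ.1.eigenvalues i := by
  rcases isEmpty_or_nonempty (Fin n) with hn | hn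
  · -- for `n = 0` the infimum takes the junk value `0`, and both sides vanish
    simp [frobNorm]
  · exact frobNorm_le_div_of_ip_le hX hZ.iInf_eigenvalues_pos
      hZ.1.posSemidef_sub_iInf_eigenvalues_smul_one h

theorem ip_add_ip_eq_ip_of_optimal {A₀ Xs X Z Xt Zt : Mat n} {A : Fin m → Mat n}
    {b y yt : Fin m → ℝ} (hA₀ : A₀.IsSymm) (hA : ∀ k, (A k).IsSymm) (hXs : Xs.PosDef)
    (hXsb : ∀ k, ip (A k) Xs = b k) (hX : X ∈ dualOpt A₀ A b) (hyZ : ∑ k, y k • A k + Z = A₀)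
    (hZ : Z.PosSemidef) (hy : ∑ k, b k * y k = sSup (primalVals A₀ A b))
    (hXt : Xt ∈ dualFeas A b) (hyZt : ∑ k, yt k • A k + Zt = A₀) :
    ip X Zt + ip Xt Z = ip Xt Zt := by
  have hslack : (A₀ - ∑ k, y k • A k).PosSemidef := by rwa [← eq_sub_of_add_eq' hyZ]
  have hgap : ip A₀ X = ∑ k, b k * y k := by
    rw [hX.2, hy, sSup_primalVals_eq_sInf_dualVals hA₀ hA hXs hXsb hslack]
  rw [ip_slack_eq hX.1.2 hyZt, ip_slack_eq hXt.2 hyZ, ip_slack_eq hXt.2 hyZt, hgap]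
  ring

theorem frobNorm_le_of_mem_dualOpt {A₀ Xs X : Mat n} {A : Fin m → Mat n} {b y₀ : Fin m → ℝ}
    {a : ℝ} (ha : 0 < a) (hy₀ : (A₀ - ∑ k, y₀ k • A k - a • 1).PosSemidef)
    (hXs : Xs ∈ dualFeas A b) (hX : X ∈ dualOpt A₀ A b) :
    frobNorm X ≤ (ip A₀ Xs - ∑ k, b k * y₀ k) / a := by
  refine frobNorm_le_div_of_ip_le hX.1.1 ha hy₀ ?_
  rw [ip_slack_eq hX.1.2 (add_sub_cancel _ A₀), hX.2]
  have := csInf_le (bddBelow_dualVals (hy₀.of_sub_smul_one ha.le)) ⟨Xs, hXs, rfl⟩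
  linarith

theorem frobNorm_le_of_mem_primalOptSlack {A₀ Xs Z : Mat n} {A : Fin m → Mat n}
    {b y₀ : Fin m → ℝ} {a : ℝ} (ha : 0 < a) (hXs : (Xs - a • 1).PosSemidef)
    (hXsb : ∀ k, ip (A k) Xs = b k) (hy₀ : (A₀ - ∑ k, y₀ k • A k).PosSemidef)
    (hZ : Z ∈ primalOptSlack A₀ A b) : frobNorm Z ≤ (ip A₀ Xs - ∑ k, b k * y₀ k) / a := by
  obtain ⟨y, hyZ, hZ, hy⟩ := hZ
  refine frobNorm_le_div_of_ip_le hZ ha hXs ?_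
  rw [ip_comm, ip_slack_eq hXsb hyZ]
  have := le_csSup (bddAbove_primalVals ⟨hXs.of_sub_smul_one ha.le, hXsb⟩) ⟨y₀, hy₀, rfl⟩
  linarith

theorem eventually_frobNorm_le_of_tendsto {α : Type*} {l : Filter α} {A₀ : α → Mat n}
    {A : Fin m → α → Mat n} {b : α → Fin m → ℝ} {Xf : α → Mat n} {A₀' X' : Mat n}
    {A' : Fin m → Mat n} {b' y₀ : Fin m → ℝ} (hA₀symm : ∀ t, (A₀ t).IsSymm)
    (hAsymm : ∀ k t, (A k t).IsSymm) (hA₀ : Tendsto A₀ l (𝓝 A₀'))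
    (hA : ∀ k, Tendsto (A k) l (𝓝 (A' k))) (hb : Tendsto b l (𝓝 b'))
    (hXf : Tendsto Xf l (𝓝 X')) (hX' : X'.PosDef)
    (hXf_feas : ∀ᶠ t in l, Xf t ∈ dualFeas (fun k => A k t) (b t))
    (hy₀ : (A₀' - ∑ k, y₀ k • A' k).PosDef) :
    ∃ R, ∀ᶠ t in l, (∀ X ∈ dualOpt (A₀ t) (fun k => A k t) (b t), frobNorm X ≤ R) ∧
      (∀ Z ∈ primalOptSlack (A₀ t) (fun k => A k t) (b t), frobNorm Z ≤ R) := by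
  obtain ⟨a, ha, haM⟩ := hy₀.exists_pos_posSemidef_sub_smul_one
  obtain ⟨a', ha', haX⟩ := hX'.exists_pos_posSemidef_sub_smul_one
  have hM : Tendsto (fun t => A₀ t - ∑ k, y₀ k • A k t) l (𝓝 (A₀' - ∑ k, y₀ k • A' k)) :=
    hA₀.sub (tendsto_finsetSum _ fun k _ => (hA k).const_smul (y₀ k))
  have hgap : Tendsto (fun t => ip (A₀ t) (Xf t) - ∑ k, b t k * y₀ k) l
      (𝓝 (ip A₀' X' - ∑ k, b' k * y₀ k)) :=
    (hA₀.ip hXf).sub (tendsto_finsetSum _ fun k _ =>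
      (((continuous_apply k).tendsto _).comp hb).mul_const _)
  set C := ip A₀' X' - ∑ k, b' k * y₀ k + 1
  refine ⟨max (C / (a / 2)) (C / (a' / 2)), ?_⟩
  filter_upwards [hM.eventually_posSemidef_sub_smul_one (.of_forall fun t =>
      isHermitian_sub_sum_smul (hA₀symm t) (fun k => hAsymm k t) y₀) haM (half_lt_self ha),
    hXf.eventually_posSemidef_sub_smul_one (hXf_feas.mono fun t ht => ht.1.1) haX
      (half_lt_self ha'),
    hgap.eventually (gt_mem_nhds (lt_add_one _)), hXf_feas] with t hMt hXt hgt hft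
  refine ⟨fun X hX => ?_, fun Z hZ => ?_⟩
  · exact (frobNorm_le_of_mem_dualOpt (half_pos ha) hMt hft hX).trans
      (le_max_of_le_left (div_le_div_of_nonneg_right hgt.le (half_pos ha).le))
  · exact (frobNorm_le_of_mem_primalOptSlack (half_pos ha') hXt hft.2
      (hMt.of_sub_smul_one (half_pos ha).le) hZ).trans
      (le_max_of_le_right (div_le_div_of_nonneg_right hgt.le (half_pos ha').le))

theorem exists_forall_Icc_of_eventually_nhdsWithin {P : ℝ → Prop} {δ : ℝ} (hδ : 0 < δ)
    (h : ∀ᶠ t in 𝓝[Icc 0 δ] 0, P t) : ∃ δ', 0 < δ' ∧ δ' ≤ δ ∧ ∀ t ∈ Icc 0 δ', P t := by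
  rw [nhdsWithin_Icc_eq_nhdsGE hδ] at h
  obtain ⟨u, hu, huP⟩ := mem_nhdsGE_iff_exists_Icc_subset.1 h
  exact ⟨min δ u, lt_min hδ hu, min_le_left _ _,
    fun t ht => huP ⟨ht.1, ht.2.trans (min_le_right _ _)⟩⟩

end OptimalSets

theorem eigenvalue_bound_and_uniform_boundedness_general (n m : ℕ)
    (δ : ℝ) (hδ : 0 < δ)
    (A₀ : ℝ → Mat n) (A : Fin m → ℝ → Mat n) (b : ℝ → Fin m → ℝ)
    (hA₀symm : ∀ t, (A₀ t).IsSymm) (hAsymm : ∀ k t, (A k t).IsSymm)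
    (hA₀cont : Tendsto A₀ (nhdsWithin 0 (Icc 0 δ)) (nhds (A₀ 0)))
    (hAcont : ∀ k, Tendsto (A k) (nhdsWithin 0 (Icc 0 δ)) (nhds (A k 0)))
    (hbcont : Tendsto b (nhdsWithin 0 (Icc 0 δ)) (nhds (b 0)))
    -- the primal SDP at t = 0 is strictly feasible
    (hPstrict : ∃ y : Fin m → ℝ, (A₀ 0 - ∑ k, y k • A k 0).PosDef)
    -- the perturbed duals have strictly feasible points X_t → X₀
    (Xf : ℝ → Mat n)
    (hXf : ∀ t ∈ Icc (0:ℝ) δ, (Xf t).PosDef ∧ ∀ k, ip (A k t) (Xf t) = b t k)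
    (hXfcont : Tendsto Xf (nhdsWithin 0 (Icc 0 δ)) (nhds (Xf 0))) :
    -- (i) eigenvalue bound
    (∀ (X Z : Mat n) (c : ℝ) (_hX : X.PosSemidef) (hZ : Z.PosDef),
      ip X Z ≤ c → frobNorm X ≤ c / ⨅ i, hZ.1.eigenvalues i) ∧
    -- (ii) trace identity at optimality
    (∀ t ∈ Icc (0:ℝ) δ, ∀ (X Z Xt Zt : Mat n) (y yt : Fin m → ℝ),
      X ∈ dualOpt (A₀ t) (fun k => A k t) (b t) →
      ((∑ k, y k • A k t) + Z = A₀ t ∧ Z.PosSemidef ∧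
        (∑ k, b t k * y k) = sSup (primalVals (A₀ t) (fun k => A k t) (b t))) →
      Xt ∈ dualFeas (fun k => A k t) (b t) →
      ((∑ k, yt k • A k t) + Zt = A₀ t ∧ Zt.PosDef) →
      ip X Zt + ip Xt Z = ip Xt Zt) ∧
    -- (iii) uniform boundedness of the optimal solution sets
    (∃ δ' : ℝ, 0 < δ' ∧ δ' ≤ δ ∧ ∃ R : ℝ, ∀ t ∈ Icc (0:ℝ) δ',
      (∀ X ∈ dualOpt (A₀ t) (fun k => A k t) (b t), frobNorm X ≤ R) ∧
      (∀ Z ∈ primalOptSlack (A₀ t) (fun k => A k t) (b t), frobNorm Z ≤ R)) := by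
  obtain ⟨y₀, hy₀⟩ := hPstrict
  refine ⟨fun X Z c hX hZ h => frobNorm_le_div_iInf_eigenvalues hX hZ h, ?_, ?_⟩
  · intro t ht X Z Xt Zt y yt hX hZ hXt hZt
    exact ip_add_ip_eq_ip_of_optimal (hA₀symm t) (fun k => hAsymm k t) (hXf t ht).1
      (hXf t ht).2 hX hZ.1 hZ.2.1 hZ.2.2 hXt hZt.1
  · obtain ⟨R, hR⟩ := eventually_frobNorm_le_of_tendsto hA₀symm hAsymm hA₀cont hAcont hbcont
      hXfcont (hXf 0 ⟨le_rfl, hδ.le⟩).1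
      (eventually_mem_nhdsWithin.mono fun t ht => ⟨(hXf t ht).1.posSemidef, (hXf t ht).2⟩) hy₀
    obtain ⟨δ', hδ', hδ'δ, hδ'R⟩ := exists_forall_Icc_of_eventually_nhdsWithin hδ hR
    exact ⟨δ', hδ', hδ'δ, R, hδ'R⟩

/-- (i) If `X ∈ S^n_+`, `Z` is positive definite and `X • Z ≤ c`, then
`‖X‖ ≤ c / λ_min(Z)`.  (ii) If `X_t, Z_t` are feasible for the perturbed dual and
primal with `Z_t` positive definite and `X, Z` are optimal, then
`X • Z_t + X_t • Z = X_t • Z_t`.  (iii) Consequently, if the primal SDP at `t = 0`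
is strictly feasible and the perturbed duals have strictly feasible points
`X_t → X₀`, the optimal solution sets of the perturbed dual and primal SDPs are
uniformly bounded for small `t`. -/
theorem eigenvalue_bound_and_uniform_boundedness (n m : ℕ) (hn : 0 < n)
    (δ : ℝ) (hδ : 0 < δ)
    (A₀ : ℝ → Mat n) (A : Fin m → ℝ → Mat n) (b : ℝ → Fin m → ℝ)
    (hA₀symm : ∀ t, (A₀ t).IsSymm) (hAsymm : ∀ k t, (A k t).IsSymm)
    (hA₀cont : Tendsto A₀ (nhdsWithin 0 (Icc 0 δ)) (nhds (A₀ 0)))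
    (hAcont : ∀ k, Tendsto (A k) (nhdsWithin 0 (Icc 0 δ)) (nhds (A k 0)))
    (hbcont : Tendsto b (nhdsWithin 0 (Icc 0 δ)) (nhds (b 0)))
    -- the primal SDP at t = 0 is strictly feasible
    (hPstrict : ∃ y : Fin m → ℝ, (A₀ 0 - ∑ k, y k • A k 0).PosDef)
    -- the perturbed duals have strictly feasible points X_t → X₀
    (Xf : ℝ → Mat n)
    (hXf : ∀ t ∈ Icc (0:ℝ) δ, (Xf t).PosDef ∧ ∀ k, ip (A k t) (Xf t) = b t k)
    (hXfcont : Tendsto Xf (nhdsWithin 0 (Icc 0 δ)) (nhds (Xf 0))) :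
    -- (i) eigenvalue bound
    (∀ (X Z : Mat n) (c : ℝ) (_hX : X.PosSemidef) (hZ : Z.PosDef),
      ip X Z ≤ c → frobNorm X ≤ c / ⨅ i, hZ.1.eigenvalues i) ∧
    -- (ii) trace identity at optimality
    (∀ t ∈ Icc (0:ℝ) δ, ∀ (X Z Xt Zt : Mat n) (y yt : Fin m → ℝ),
      X ∈ dualOpt (A₀ t) (fun k => A k t) (b t) →
      ((∑ k, y k • A k t) + Z = A₀ t ∧ Z.PosSemidef ∧
        (∑ k, b t k * y k) = sSup (primalVals (A₀ t) (fun k => A k t) (b t))) →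
      Xt ∈ dualFeas (fun k => A k t) (b t) →
      ((∑ k, yt k • A k t) + Zt = A₀ t ∧ Zt.PosDef) →
      ip X Zt + ip Xt Z = ip Xt Zt) ∧
    -- (iii) uniform boundedness of the optimal solution sets
    (∃ δ' : ℝ, 0 < δ' ∧ δ' ≤ δ ∧ ∃ R : ℝ, ∀ t ∈ Icc (0:ℝ) δ',
      (∀ X ∈ dualOpt (A₀ t) (fun k => A k t) (b t), frobNorm X ≤ R) ∧
      (∀ Z ∈ primalOptSlack (A₀ t) (fun k => A k t) (b t), frobNorm Z ≤ R)) :=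
  eigenvalue_bound_and_uniform_boundedness_general n m δ hδ A₀ A b hA₀symm hAsymm hA₀cont hAcont
    hbcont hPstrict Xf hXf hXfcont
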